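/- Let 𝒰 be a nonprincipal ultrafilter on ℕ and *ℚ, *ℝ the corresponding ultrapowers. The standard part map restricted to bounded hyperrationals, st : *ℚ ∩ ᵇℝ → ℝ, is a surjective ring homomorphism with kernel *ℚ ∩ ⁱℝ; hence the quotient ring (*ℚ ∩ ᵇℝ)/(*ℚ ∩ ⁱℝ) is isomorphic to ℝ. -/

import Mathlib

/-!
A bounded sequence has a limit along an ultrafilter (the values eventually lie in a compact
interval), and this limit is the standard part; limits along a filter are additive and
multiplicative, so `st` is a ring homomorphism, and its kernel consists of the germs whose limit
is `0`, i.e. the infinitesimals. For a nonprincipal `𝒰` on `ℕ`, a sequence of rationals converging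
to `r` along `atTop` also converges to `r` along `𝒰`, so `st` is already surjective on `*ℚ`.
-/

open Filter Topology

namespace Filter.Germ

variable {α : Type*}

def boundedSubring (l : Filter α) : Subring (Germ l ℝ) where
  carrier := {x | ∃ m : ℕ, x.LiftPred fun r : ℝ => |r| ≤ (m : ℝ)}
  one_mem' := ⟨1, liftPred_const (by simp)⟩
  zero_mem' := ⟨0, liftPred_const (by simp)⟩
  mul_mem' := by
    rintro x y ⟨m, hm⟩ ⟨n, hn⟩
    induction x using Germ.inductionOn
    induction y using Germ.inductionOn
    refine ⟨m * n, liftPred_coe.2 ?_⟩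
    filter_upwards [liftPred_coe.1 hm, liftPred_coe.1 hn] with a ha hb
    simpa [abs_mul] using mul_le_mul ha hb (abs_nonneg _) m.cast_nonneg
  add_mem' := by
    rintro x y ⟨m, hm⟩ ⟨n, hn⟩
    induction x using Germ.inductionOn
    induction y using Germ.inductionOn
    refine ⟨m + n, liftPred_coe.2 ?_⟩
    filter_upwards [liftPred_coe.1 hm, liftPred_coe.1 hn] with a ha hb
    push_cast
    exact (abs_add_le _ _).trans (add_le_add ha hb)
  neg_mem' := by
    rintro x ⟨m, hm⟩
    induction x using Germ.inductionOn
    refine ⟨m, ?_⟩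
    rw [← coe_neg, liftPred_coe]
    simpa using liftPred_coe.1 hm

noncomputable def ratSubring (l : Filter α) : Subring (Germ l ℝ) :=
  ((coeRingHom l).comp ((Rat.castHom ℝ).compLeft α)).range

theorem mem_ratSubring {l : Filter α} {x : Germ l ℝ} :
    x ∈ ratSubring l ↔ ∃ q : α → ℚ, x = ↑(fun a => (q a : ℝ)) := by
  simp only [ratSubring, RingHom.mem_range, eq_comm (a := x)]
  rfl

theorem mem_boundedSubring_of_tendsto {l : Filter α} {f : α → ℝ} {a : ℝ}
    (h : Tendsto f l (𝓝 a)) : (f : Germ l ℝ) ∈ boundedSubring l := by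
  refine ⟨⌈|a| + 1⌉₊, liftPred_coe.2 ?_⟩
  filter_upwards [h.abs.eventually (gt_mem_nhds (lt_add_one |a|))] with n hn
  exact hn.le.trans (Nat.le_ceil _)

-- Meaningful only on `boundedSubring`: on unbounded germs `limUnder` returns a junk value.
noncomputable def stdPart {l : Filter α} (x : Germ l ℝ) : ℝ :=
  x.liftOn (limUnder l) fun _ _ h => by simp only [limUnder, map_congr h]

theorem stdPart_coe_of_tendsto {l : Filter α} [NeBot l] {f : α → ℝ} {a : ℝ}
    (h : Tendsto f l (𝓝 a)) : stdPart (f : Germ l ℝ) = a :=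
  h.limUnder_eq

theorem tendsto_stdPart_of_mem_boundedSubring {l : Ultrafilter α} {f : α → ℝ}
    (hf : (f : Germ (l : Filter α) ℝ) ∈ boundedSubring l) :
    Tendsto f l (𝓝 (stdPart (f : Germ (l : Filter α) ℝ))) := by
  obtain ⟨m, hm⟩ := hf
  have hIcc : Set.Icc (-(m : ℝ)) m ∈ l.map f :=
    (liftPred_coe.1 hm).mono fun _ => abs_le.1
  obtain ⟨a, -, ha⟩ := isCompact_Icc.ultrafilter_le_nhds (l.map f) (le_principal_iff.2 hIcc)
  rwa [stdPart_coe_of_tendsto ha]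

theorem exists_tendsto_stdPart {l : Ultrafilter α} {x : Germ (l : Filter α) ℝ}
    (hx : x ∈ boundedSubring (l : Filter α)) :
    ∃ f : α → ℝ, x = (f : Germ (l : Filter α) ℝ) ∧ Tendsto f l (𝓝 (stdPart x)) := by
  induction x using Germ.inductionOn with
  | h f => exact ⟨f, rfl, tendsto_stdPart_of_mem_boundedSubring hx⟩

theorem forall_liftPred_abs_sub_le_iff_tendsto {l : Filter α} {f : α → ℝ} {a : ℝ} :
    (∀ ε : ℝ, 0 < ε → (f : Germ l ℝ).LiftPred fun r => |r - a| ≤ ε) ↔ Tendsto f l (𝓝 a) := by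
  simp only [liftPred_coe, Metric.nhds_basis_closedBall.tendsto_right_iff, Metric.mem_closedBall,
    Real.dist_eq]

theorem stdPart_eq_iff {l : Ultrafilter α} {x : Germ (l : Filter α) ℝ}
    (hx : x ∈ boundedSubring (l : Filter α)) {a : ℝ} :
    stdPart x = a ↔ ∀ ε : ℝ, 0 < ε → x.LiftPred fun r => |r - a| ≤ ε := by
  obtain ⟨f, rfl, hf⟩ := exists_tendsto_stdPart hx
  rw [forall_liftPred_abs_sub_le_iff_tendsto]
  exact ⟨fun h => h ▸ hf, stdPart_coe_of_tendsto⟩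

noncomputable def stdPartHom (l : Ultrafilter α) : boundedSubring (l : Filter α) →+* ℝ where
  toFun x := stdPart (x : Germ (l : Filter α) ℝ)
  map_one' := stdPart_coe_of_tendsto tendsto_const_nhds
  map_zero' := stdPart_coe_of_tendsto tendsto_const_nhds
  map_add' := by
    rintro ⟨_, hx⟩ ⟨_, hy⟩
    obtain ⟨f, rfl, hf⟩ := exists_tendsto_stdPart hx
    obtain ⟨g, rfl, hg⟩ := exists_tendsto_stdPart hy
    exact stdPart_coe_of_tendsto (hf.add hg)
  map_mul' := by
    rintro ⟨_, hx⟩ ⟨_, hy⟩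
    obtain ⟨f, rfl, hf⟩ := exists_tendsto_stdPart hx
    obtain ⟨g, rfl, hg⟩ := exists_tendsto_stdPart hy
    exact stdPart_coe_of_tendsto (hf.mul hg)

end Filter.Germ

theorem Ultrafilter.le_atTop_of_forall_ne_pure {𝒰 : Ultrafilter ℕ} (h : ∀ a, 𝒰 ≠ pure a) :
    (𝒰 : Filter ℕ) ≤ atTop :=
  (𝒰.le_cofinite_or_eq_pure.resolve_right fun ⟨a, ha⟩ => h a ha).trans Nat.cofinite_eq_atTop.le

theorem exists_rat_seq_tendsto (r : ℝ) : ∃ q : ℕ → ℚ, Tendsto (fun n => (q n : ℝ)) atTop (𝓝 r) := by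
  obtain ⟨x, hx, hlim⟩ := mem_closure_iff_seq_limit.1 (Rat.denseRange_cast (𝕜 := ℝ) r)
  choose q hq using hx
  exact ⟨q, by simpa only [hq] using hlim⟩

/-- **Standard part on bounded hyperrationals.**  Let `𝒰` be a nonprincipal
ultrafilter on `ℕ` and `*ℝ = Germ 𝒰 ℝ`, `*ℚ ⊆ *ℝ` the corresponding ultrapowers.
The subset `*ℚ ∩ ᵇℝ` of bounded hyperrationals is a subring of `*ℝ`, and the
standard part map `st : *ℚ ∩ ᵇℝ → ℝ` (sending each bounded hyperrational to the
unique real infinitely close to it) is a surjective ring homomorphism whose kernel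
is the ideal `*ℚ ∩ ⁱℝ` of infinitesimal hyperrationals; hence the quotient ring
`(*ℚ ∩ ᵇℝ)/(*ℚ ∩ ⁱℝ)` is isomorphic to `ℝ`. -/
theorem standard_part_bounded_hyperrationals
    (𝒰 : Ultrafilter ℕ) (h𝒰 : ∀ a : ℕ, 𝒰 ≠ pure a) :
    ∃ S : Subring (Germ (𝒰 : Filter ℕ) ℝ),
      ((S : Set (Germ (𝒰 : Filter ℕ) ℝ)) =
        {x | (∃ q : ℕ → ℚ, x = (↑(fun n => (q n : ℝ)) : Germ (𝒰 : Filter ℕ) ℝ)) ∧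
          ∃ m : ℕ, x.LiftPred fun r : ℝ => |r| ≤ (m : ℝ)}) ∧
      ∃ st : S →+* ℝ,
        (∀ x : S, ∀ ε : ℝ, 0 < ε →
          Filter.Germ.LiftPred (fun r : ℝ => |r - st x| ≤ ε) (x : Germ (𝒰 : Filter ℕ) ℝ)) ∧
        Function.Surjective st ∧
        (∀ x : S, x ∈ RingHom.ker st ↔
          ∀ ε : ℝ, 0 < ε →
            Filter.Germ.LiftPred (fun r : ℝ => |r| ≤ ε) (x : Germ (𝒰 : Filter ℕ) ℝ)) ∧
        Nonempty ((S ⧸ RingHom.ker st) ≃+* ℝ) := by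
  let S := Germ.ratSubring (𝒰 : Filter ℕ) ⊓ Germ.boundedSubring (𝒰 : Filter ℕ)
  let st : S →+* ℝ := (Germ.stdPartHom 𝒰).comp (Subring.inclusion inf_le_right)
  have hsurj : Function.Surjective st := by
    intro r
    obtain ⟨q, hq⟩ := exists_rat_seq_tendsto r
    have hq𝒰 := hq.mono_left (Ultrafilter.le_atTop_of_forall_ne_pure h𝒰)
    exact ⟨⟨_, Germ.mem_ratSubring.2 ⟨q, rfl⟩, Germ.mem_boundedSubring_of_tendsto hq𝒰⟩,
      Germ.stdPart_coe_of_tendsto hq𝒰⟩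
  refine ⟨S, ?_, st, fun x => (Germ.stdPart_eq_iff x.2.2).1 rfl, hsurj, fun x => ?_,
    ⟨RingHom.quotientKerEquivOfSurjective hsurj⟩⟩
  · ext x
    simp only [S, Subring.coe_inf, Set.mem_inter_iff, SetLike.mem_coe, Germ.mem_ratSubring]
    rfl
  · have hker := Germ.stdPart_eq_iff x.2.2 (a := 0)
    simp only [sub_zero] at hker
    exact hker
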